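/- (Lemma 2.1) Define the sequence α₁ = 0 and α_{j+1} = α_j + 2j for j = 1, 2, 3, … (equivalently α_j = j(j-1)). Let j ≥ 1 and let α ≥ α_j be real. Define f : ℝ → ℝ by f(t) = exp(-α/(1-t)) for t < 1 and f(t) = 0 for t ≥ 1. Then for every t > 0, (-1)^j times the j-th derivative of f at t is nonnegative, i.e. (-1)^j f^{(j)}(t) ≥ 0. -/

import Mathlib

/-!
For `t < 1` put `w = 1 / (1 - t)`. Differentiating in `t` acts as `w² d/dw`, and induction gives
`f⁽ʲ⁾(t) = P_j(w) e^{-αw}` with `P_j(w) = ∑ₖ (-1)ᵏ L(j,k) αᵏ w^{j+k}`, where `L(j,k)` are the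
Lah numbers. Since `L(j,k) / L(j,k+1) = k(k+1) / (j-k) ≤ j(j-1) ≤ α ≤ αw` for `k < j`, the terms
of the alternating sum `(-1)ʲ P_j(w)` grow in absolute value, so it has the sign of its last
term `L(j,j) (αw)ʲ wʲ > 0`. For `t > 1` all derivatives vanish, and at `t = 1` they vanish by
continuity, `f` being smooth.
-/

/-- The sequence `α₁ = 0`, `α_{j+1} = α_j + 2j` (so `α_j = j(j-1)`). -/
def alphaSeq : ℕ → ℕ
  | 0 => 0
  | j + 1 => alphaSeq j + 2 * j

open Finset Real

lemma alphaSeq_eq (j : ℕ) : alphaSeq j = j * (j - 1) := by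
  induction j with
  | zero => rfl
  | succ j ih =>
    rw [alphaSeq, ih]
    cases j with
    | zero => rfl
    | succ j => simp only [Nat.add_sub_cancel]; ring

/-- The unsigned Lah numbers `L(j,k) = C(j-1,k-1) j! / k!`. -/
def lah : ℕ → ℕ → ℕ
  | 0, 0 => 1
  | 0, _ + 1 => 0
  | _ + 1, 0 => 0
  | j + 1, k + 1 => lah j k + (j + k + 1) * lah j (k + 1)

@[simp] lemma lah_zero_succ (k : ℕ) : lah 0 (k + 1) = 0 := rfl

@[simp] lemma lah_succ_zero (j : ℕ) : lah (j + 1) 0 = 0 := rfl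

lemma lah_succ_succ (j k : ℕ) :
    lah (j + 1) (k + 1) = lah j k + (j + k + 1) * lah j (k + 1) := rfl

@[simp] lemma mul_lah_zero (j : ℕ) : j * lah j 0 = 0 := by
  cases j <;> rfl

lemma lah_eq_zero_of_lt {j k : ℕ} (h : j < k) : lah j k = 0 := by
  induction j generalizing k with
  | zero => obtain ⟨k, rfl⟩ := Nat.exists_eq_succ_of_ne_zero h.ne'; rfl
  | succ j ih =>
    obtain ⟨k, rfl⟩ := Nat.exists_eq_succ_of_ne_zero (by omega : k ≠ 0)
    rw [lah_succ_succ, ih (by omega), ih (by omega), mul_zero, add_zero]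

/-- `L(j,k) / L(j,k+1) = k(k+1) / (j-k)`, written without division or subtraction. -/
lemma succ_mul_mul_lah_succ_add (j k : ℕ) :
    (k + 1) * k * lah j (k + 1) + k * lah j k = j * lah j k := by
  induction j generalizing k with
  | zero => cases k <;> simp
  | succ j ih =>
    cases k with
    | zero => simp
    | succ k =>
      have h₁ := ih k
      have h₂ := ih (k + 1)
      simp only [lah_succ_succ]
      nlinarith

lemma lah_le_succ_mul_mul_lah_succ {j k : ℕ} (h : k < j) :
    lah j k ≤ (k + 1) * k * lah j (k + 1) := by
  have := succ_mul_mul_lah_succ_add j k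
  nlinarith

lemma sum_range_lah_succ_mul {R : Type*} [CommSemiring R] (j : ℕ) (x : ℕ → R) :
    ∑ k ∈ range (j + 2), (lah (j + 1) k : R) * x k
      = ∑ k ∈ range (j + 1), (((j + k) * lah j k : ℕ) * x k + lah j k * x (k + 1)) := by
  set g : ℕ → R := fun k => ((j + k) * lah j k : ℕ) * x k
  have hshift : ∑ k ∈ range (j + 1), g (k + 1) = ∑ k ∈ range (j + 1), g k := by
    have hlast : g (j + 1) = 0 := by simp [g, lah_eq_zero_of_lt (Nat.lt_succ_self j)]
    have hfirst : g 0 = 0 := by simp only [g, add_zero, mul_lah_zero, Nat.cast_zero, zero_mul]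
    have h := sum_range_succ' g (j + 1)
    rwa [sum_range_succ, hlast, hfirst, add_zero, add_zero, eq_comm] at h
  rw [sum_range_succ', sum_add_distrib, ← hshift]
  simp only [lah_succ_zero, lah_succ_succ, g]
  push_cast
  simp only [zero_mul, add_zero, ← sum_add_distrib]
  exact sum_congr rfl fun k _ => by ring

lemma neg_one_pow_mul_sum_neg_one_pow_mul_mem_Icc {R : Type*} [CommRing R] [LinearOrder R]
    [IsStrictOrderedRing R] {c : ℕ → R} {n : ℕ} (h₀ : 0 ≤ c 0)
    (hc : ∀ k < n, c k ≤ c (k + 1)) :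
    (-1) ^ n * ∑ k ∈ range (n + 1), (-1) ^ k * c k ∈ Set.Icc 0 (c n) := by
  induction n with
  | zero => simpa using h₀
  | succ n ih =>
    obtain ⟨ih₀, ih₁⟩ := ih fun k hk => hc k (by omega)
    have hstep : (-1) ^ (n + 1) * ∑ k ∈ range (n + 2), (-1) ^ k * c k
        = c (n + 1) - (-1) ^ n * ∑ k ∈ range (n + 1), (-1) ^ k * c k := by
      rw [sum_range_succ, mul_add, ← mul_assoc, ← pow_add, Even.neg_one_pow ⟨n + 1, rfl⟩]
      ring
    rw [hstep]
    have := hc n (by omega)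
    constructor <;> linarith

def bumpPoly (α : ℝ) (j : ℕ) (w : ℝ) : ℝ :=
  ∑ k ∈ range (j + 1), (-1) ^ k * lah j k * α ^ k * w ^ (j + k)

lemma bumpPoly_succ (α : ℝ) (j : ℕ) (w : ℝ) :
    bumpPoly α (j + 1) w
      = ∑ k ∈ range (j + 1), (-1) ^ k * lah j k * α ^ k * ((j + k : ℕ) * w ^ (j + k + 1))
        - α * w ^ 2 * bumpPoly α j w := by
  have h := sum_range_lah_succ_mul j fun k => (-1) ^ k * α ^ k * w ^ (j + 1 + k)
  rw [bumpPoly, bumpPoly, mul_sum, ← sum_sub_distrib]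
  convert h using 1
  · exact sum_congr rfl fun k _ => by ring
  · refine sum_congr rfl fun k _ => ?_
    push_cast
    ring

lemma neg_one_pow_mul_bumpPoly_nonneg {α w : ℝ} {j : ℕ} (hα : (alphaSeq j : ℝ) ≤ α)
    (hw : 1 ≤ w) : 0 ≤ (-1) ^ j * bumpPoly α j w := by
  have hα₀ : 0 ≤ α := (Nat.cast_nonneg _).trans hα
  have hmono : ∀ k < j, (lah j k * (α ^ k * w ^ (j + k)) : ℝ)
      ≤ lah j (k + 1) * (α ^ (k + 1) * w ^ (j + (k + 1))) := by
    intro k hk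
    have hkα : ((k + 1) * k : ℕ) ≤ α * w := calc
      (((k + 1) * k : ℕ) : ℝ) ≤ alphaSeq j := by
        rw [alphaSeq_eq]; exact_mod_cast Nat.mul_le_mul (by omega) (by omega)
      _ ≤ α := hα
      _ ≤ α * w := le_mul_of_one_le_right hα₀ hw
    have hlah : (lah j k : ℝ) ≤ α * w * lah j (k + 1) := calc
      (lah j k : ℝ) ≤ ((k + 1) * k : ℕ) * lah j (k + 1) := by
        exact_mod_cast lah_le_succ_mul_mul_lah_succ hk
      _ ≤ α * w * lah j (k + 1) := by gcongr
    calc (lah j k * (α ^ k * w ^ (j + k)) : ℝ)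
        ≤ (α * w * lah j (k + 1)) * (α ^ k * w ^ (j + k)) := by gcongr
      _ = lah j (k + 1) * (α ^ (k + 1) * w ^ (j + (k + 1))) := by ring
  have h := (neg_one_pow_mul_sum_neg_one_pow_mul_mem_Icc (by positivity) hmono).1
  simpa only [bumpPoly, mul_assoc] using h

noncomputable def bump (α s : ℝ) : ℝ := if s < 1 then exp (-α / (1 - s)) else 0

lemma hasDerivAt_inv_one_sub_pow (n : ℕ) {t : ℝ} (ht : t ≠ 1) :
    HasDerivAt (fun s => (1 - s)⁻¹ ^ n) (n * (1 - t)⁻¹ ^ (n + 1)) t := by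
  have hinv : HasDerivAt (fun s => (1 - s)⁻¹) ((1 - t)⁻¹ ^ 2) t := by
    refine (((hasDerivAt_id t).const_sub 1).inv (sub_ne_zero.2 ht.symm)).congr_deriv ?_
    rw [id, neg_neg, one_div, inv_pow]
  refine (hinv.pow n).congr_deriv ?_
  rcases n with _ | n
  · simp
  · rw [Nat.add_sub_cancel]
    ring

lemma hasDerivAt_bumpPoly_inv_one_sub_mul_exp (α : ℝ) (j : ℕ) {t : ℝ} (ht : t ≠ 1) :
    HasDerivAt (fun s => bumpPoly α j (1 - s)⁻¹ * exp (-α / (1 - s)))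
      (bumpPoly α (j + 1) (1 - t)⁻¹ * exp (-α / (1 - t))) t := by
  have hpoly : HasDerivAt (fun s => bumpPoly α j (1 - s)⁻¹)
      (∑ k ∈ range (j + 1), (-1) ^ k * lah j k * α ^ k * ((j + k : ℕ) * (1 - t)⁻¹ ^ (j + k + 1)))
      t := by
    unfold bumpPoly
    exact HasDerivAt.fun_sum fun k _ => (hasDerivAt_inv_one_sub_pow _ ht).const_mul _
  have hexp : HasDerivAt (fun s => exp (-α / (1 - s)))
      (exp (-α / (1 - t)) * (-α * (1 - t)⁻¹ ^ 2)) t := by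
    convert ((hasDerivAt_inv_one_sub_pow 1 ht).const_mul (-α)).exp using 1 <;>
      simp [div_eq_mul_inv]
  refine (hpoly.mul hexp).congr_deriv ?_
  rw [bumpPoly_succ]
  ring

lemma iteratedDeriv_bump_of_lt_one (α : ℝ) (j : ℕ) {t : ℝ} (ht : t < 1) :
    iteratedDeriv j (bump α) t = bumpPoly α j (1 - t)⁻¹ * exp (-α / (1 - t)) := by
  induction j generalizing t with
  | zero => simp [bump, bumpPoly, lah, ht]
  | succ j ih =>
    have heq : iteratedDeriv j (bump α) =ᶠ[nhds t]
        fun s => bumpPoly α j (1 - s)⁻¹ * exp (-α / (1 - s)) :=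
      eventually_lt_nhds ht |>.mono fun s hs => ih hs
    rw [iteratedDeriv_succ, heq.deriv_eq,
      (hasDerivAt_bumpPoly_inv_one_sub_mul_exp α j ht.ne).deriv]

lemma iteratedDeriv_bump_of_one_lt (α : ℝ) (j : ℕ) {t : ℝ} (ht : 1 < t) :
    iteratedDeriv j (bump α) t = 0 := by
  induction j generalizing t with
  | zero => simp [bump, ht.not_gt]
  | succ j ih =>
    have heq : iteratedDeriv j (bump α) =ᶠ[nhds t] fun _ => 0 :=
      eventually_gt_nhds ht |>.mono fun s hs => ih hs
    rw [iteratedDeriv_succ, heq.deriv_eq, deriv_const]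

lemma contDiff_bump {α : ℝ} (hα : 0 < α) {n : ℕ∞} : ContDiff ℝ n (bump α) := by
  have heq : bump α = fun s => expNegInvGlue ((1 - s) / α) := by
    funext s
    by_cases hs : s < 1
    · have hpos : 0 < (1 - s) / α := div_pos (by linarith) hα
      rw [bump, if_pos hs, expNegInvGlue, if_neg hpos.not_ge, inv_div, neg_div]
    · have hnonpos : (1 - s) / α ≤ 0 := div_nonpos_of_nonpos_of_nonneg (by linarith) hα.le
      rw [bump, if_neg hs, expNegInvGlue, if_pos hnonpos]
  rw [heq]
  exact expNegInvGlue.contDiff.comp ((contDiff_const.sub contDiff_id).div_const α)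

lemma iteratedDeriv_bump_of_one_le {α : ℝ} (hα : 0 < α) (j : ℕ) {t : ℝ} (ht : 1 ≤ t) :
    iteratedDeriv j (bump α) t = 0 := by
  have hcont : Continuous (iteratedDeriv j (bump α)) :=
    (contDiff_bump hα (n := j)).continuous_iteratedDeriv'
  have hzero : Set.EqOn (iteratedDeriv j (bump α)) 0 (Set.Ioi 1) :=
    fun s hs => iteratedDeriv_bump_of_one_lt α j hs
  rw [← Set.mem_Ici, ← closure_Ioi] at ht
  exact hzero.closure hcont continuous_const ht

theorem bump_completely_monotone_general
    (j : ℕ) (α : ℝ) (hα : 0 < α) (hαj : (alphaSeq j : ℝ) ≤ α) :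
    ∀ t : ℝ, 0 < t →
      0 ≤ (-1 : ℝ) ^ j *
        iteratedDeriv j (fun s : ℝ => if s < 1 then Real.exp (-α / (1 - s)) else 0) t := by
  intro t ht
  change 0 ≤ (-1) ^ j * iteratedDeriv j (bump α) t
  rcases lt_or_ge t 1 with h | h
  · have hw : 1 ≤ (1 - t)⁻¹ := (one_le_inv₀ (by linarith)).2 (by linarith)
    rw [iteratedDeriv_bump_of_lt_one α j h, ← mul_assoc]
    exact mul_nonneg (neg_one_pow_mul_bumpPoly_nonneg hαj hw) (exp_pos _).le
  · rw [iteratedDeriv_bump_of_one_le hα j h, mul_zero]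

/-- (Lemma 2.1) If `j ≥ 1` and `α ≥ α_j = j(j-1)`, then for
`f(t) = exp(-α/(1-t))` for `t < 1`, `f(t) = 0` for `t ≥ 1`,
we have `(-1)^j f⁽ʲ⁾(t) ≥ 0` for every `t > 0`. -/
theorem bump_completely_monotone
    (j : ℕ) (hj : 1 ≤ j) (α : ℝ) (hα : 0 < α) (hαj : (alphaSeq j : ℝ) ≤ α) :
    ∀ t : ℝ, 0 < t →
      0 ≤ (-1 : ℝ) ^ j *
        iteratedDeriv j (fun s : ℝ => if s < 1 then Real.exp (-α / (1 - s)) else 0) t :=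
  bump_completely_monotone_general j α hα hαj
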